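/- Let G be a graph with vertex partition V = S ∪ S̄ and v ∈ S, under independent bond percolation. Suppose for every edge e crossing the cut (S, S̄), Pr[(v ∼ e) ∈ S] ≤ η. Then for any vertex u (possibly in S) and any local routing algorithm from u to v, Pr[algorithm succeeds within t probes | u ∼ v] ≤ (tη + Pr[(u ∼ v) ∈ S]) / Pr[u ∼ v]. -/

import Mathlib

open MeasureTheory ProbabilityTheory
open scoped ENNReal

/-- Bernoulli measure on `Bool` with parameter `p` (truncated to `[0,1]`). -/
noncomputable def bern (p : ℝ) : Measure Bool :=
  (PMF.bernoulli (min (Real.toNNReal p) 1) (min_le_right _ _)).toMeasure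

instance (p : ℝ) : IsProbabilityMeasure (bern p) := by
  unfold bern; infer_instance

/-- Independent percolation: product Bernoulli measure on configurations indexed by `E`. -/
noncomputable def perc (E : Type*) [Fintype E] (p : ℝ) : Measure (E → Bool) :=
  Measure.pi fun _ => bern p

variable {V : Type*}

/-- `x` and `y` are joined by an open path all of whose vertices lie in `S`. -/
def OpenConnOn (G : SimpleGraph V) (ω : Sym2 V → Bool) (S : Set V) (x y : V) : Prop :=
  ∃ w : G.Walk x y, (∀ e ∈ w.edges, ω e = true) ∧ ∀ z ∈ w.support, z ∈ S

/-- `x` and `y` are joined by an open path. -/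
def OpenConn (G : SimpleGraph V) (ω : Sym2 V → Bool) (x y : V) : Prop :=
  ∃ w : G.Walk x y, ∀ e ∈ w.edges, ω e = true

/-- A (deterministic, adaptive) routing algorithm: given the history of probed
edges together with their observed status, it chooses the next edge to probe. -/
structure Alg (V : Type*) where
  next : List (Sym2 V × Bool) → Sym2 V

/-- The history (list of probed edges with their status) after `t` probes. -/
def Alg.hist (A : Alg V) (ω : Sym2 V → Bool) : ℕ → List (Sym2 V × Bool)
  | 0 => []
  | t + 1 => (A.next (A.hist ω t), ω (A.next (A.hist ω t))) :: A.hist ω t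

/-- The set of edges probed and found open within the first `t` probes. -/
def Alg.probedOpen (A : Alg V) (ω : Sym2 V → Bool) (t : ℕ) : Set (Sym2 V) :=
  {e | (e, true) ∈ A.hist ω t}

/-- Vertices reachable from `u` using only edges in the set `F`. -/
def reachedFrom (G : SimpleGraph V) (u : V) (F : Set (Sym2 V)) : Set V :=
  {x | ∃ w : G.Walk u x, ∀ e ∈ w.edges, e ∈ F}

/-- A local routing algorithm only probes edges incident to a vertex already
reached from `u` by probed open edges. -/
def Alg.IsLocal (A : Alg V) (G : SimpleGraph V) (u : V) : Prop :=
  ∀ ω t, ∃ x, x ∈ reachedFrom G u (A.probedOpen ω t) ∧ x ∈ A.next (A.hist ω t)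

/-- The algorithm has succeeded within `t` probes: it has certified an open
path from `u` to `v` (all of whose edges were probed and found open). -/
def Alg.SucceedsBy (A : Alg V) (G : SimpleGraph V) (ω : Sym2 V → Bool) (u v : V) (t : ℕ) : Prop :=
  ∃ w : G.Walk u v, ∀ e ∈ w.edges, e ∈ A.probedOpen ω t

/-!
If the algorithm succeeds but `u` and `v` are not joined inside `S`, look at the first probe
`e` that is a cut edge joined to `v` by an open path inside `S`. That path uses no edge probed
before `e`: such an edge was probed from a vertex `a` reached from `u`, `a` lies on the path,
and the route from `u` to `a` would either stay in `S` (joining `u` to `v` inside `S`) or enter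
`S` through an even earlier probed cut edge joined to `v`. So at some step `i < t` the algorithm
probes a cut edge joined to `v` inside `S` by edges it has not seen yet. Given the history
before step `i`, this last event depends only on the unprobed edges, hence is independent of
the history and has probability at most `η`; a union bound over `i < t` finishes the proof.
-/

open Set

instance perc.isProbabilityMeasure (E : Type*) [Fintype E] (p : ℝ) :
    IsProbabilityMeasure (perc E p) := by
  unfold perc; infer_instance

theorem measure_pi_inter_eq_mul_of_dependsOn {ι : Type*} [Fintype ι] {α : ι → Type*}
    [∀ i, MeasurableSpace (α i)] (μ : ∀ i, Measure (α i)) [∀ i, IsProbabilityMeasure (μ i)]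
    {P : Set ι} {s t : Set (∀ i, α i)} (hs : DependsOn (· ∈ s) P) (ht : DependsOn (· ∈ t) Pᶜ) :
    Measure.pi μ (s ∩ t) = Measure.pi μ s * Measure.pi μ t := by
  classical
  set φ := MeasurableEquiv.piEquivPiSubtypeProd α (· ∈ P)
  have hφ := measurePreserving_piEquivPiSubtypeProd μ (· ∈ P)
  have hs' : s = φ ⁻¹' ({a | ∃ b, φ.symm (a, b) ∈ s} ×ˢ univ) := by
    ext ω
    refine ⟨fun h => ⟨⟨(φ ω).2, by simpa using h⟩, trivial⟩, fun ⟨⟨b, hb⟩, _⟩ => ?_⟩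
    refine (hs fun i hi => ?_).mp hb
    simp [φ, MeasurableEquiv.piEquivPiSubtypeProd, hi]
  have ht' : t = φ ⁻¹' (univ ×ˢ {b | ∃ a, φ.symm (a, b) ∈ t}) := by
    ext ω
    refine ⟨fun h => ⟨trivial, ⟨(φ ω).1, by simpa using h⟩⟩, fun ⟨_, ⟨a, ha⟩⟩ => ?_⟩
    refine (ht fun i hi => ?_).mp ha
    simp [φ, MeasurableEquiv.piEquivPiSubtypeProd, show i ∉ P from hi]
  rw [hs', ht', ← preimage_inter, prod_inter_prod, univ_inter, inter_univ,
    hφ.measure_preimage_equiv, hφ.measure_preimage_equiv, hφ.measure_preimage_equiv,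
    Measure.prod_prod, Measure.prod_prod, Measure.prod_prod, measure_univ, measure_univ,
    mul_one, one_mul]

theorem measure_le_mul_of_forall_fiber {Ω β : Type*} [MeasurableSpace Ω] [Countable β]
    {μ : Measure Ω} {K : Ω → β} (hK : ∀ b, MeasurableSet (K ⁻¹' {b})) {M : Set Ω} {c : ℝ≥0∞}
    (h : ∀ b, μ (K ⁻¹' {b} ∩ M) ≤ c * μ (K ⁻¹' {b})) : μ M ≤ c * μ univ :=
  calc μ M ≤ μ (⋃ b, K ⁻¹' {b} ∩ M) := measure_mono fun ω hω => mem_iUnion.2 ⟨K ω, rfl, hω⟩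
    _ ≤ ∑' b, μ (K ⁻¹' {b} ∩ M) := measure_iUnion_le _
    _ ≤ ∑' b, c * μ (K ⁻¹' {b}) := ENNReal.tsum_le_tsum h
    _ = c * μ univ := by
      rw [ENNReal.tsum_mul_left, ← tsum_univ,
        tsum_measure_preimage_singleton countable_univ fun b _ => hK b, preimage_univ]

theorem SimpleGraph.Walk.exists_entry_edge {G : SimpleGraph V} {S : Set V} {a b : V}
    (w : G.Walk a b) (hb : b ∈ S) (hw : ¬ ∀ z ∈ w.support, z ∈ S) :
    ∃ c d, c ∉ S ∧ s(c, d) ∈ w.edges ∧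
      ∃ w' : G.Walk d b, w'.edges ⊆ w.edges ∧ ∀ z ∈ w'.support, z ∈ S := by
  induction w with
  | nil => exact absurd (by simpa using hb) hw
  | @cons x y _ _ q ih =>
    by_cases hq : ∀ z ∈ q.support, z ∈ S
    · have hx : x ∉ S := fun hx => hw (by simpa [hx] using hq)
      exact ⟨x, y, hx, by simp, q, by simp, hq⟩
    · obtain ⟨c, d, hc, hcd, w', hsub, hS⟩ := ih hb hq
      exact ⟨c, d, hc, by simp [hcd], w', fun _ he => by simp [hsub he], hS⟩

namespace OpenConnOn

variable {G : SimpleGraph V} {ω ω' : Sym2 V → Bool} {S : Set V} {x y z : V}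

theorem refl (hx : x ∈ S) : OpenConnOn G ω S x x :=
  ⟨.nil, by simp, by simpa using hx⟩

theorem symm (h : OpenConnOn G ω S x y) : OpenConnOn G ω S y x :=
  let ⟨w, ho, hS⟩ := h
  ⟨w.reverse, fun e he => ho e (by simpa using he), fun z hz => hS z (by simpa using hz)⟩

theorem trans (h₁ : OpenConnOn G ω S x y) (h₂ : OpenConnOn G ω S y z) :
    OpenConnOn G ω S x z := by
  obtain ⟨w₁, ho₁, hS₁⟩ := h₁
  obtain ⟨w₂, ho₂, hS₂⟩ := h₂
  refine ⟨w₁.append w₂, fun e he => ?_, fun a ha => ?_⟩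
  · rcases List.mem_append.mp (by simpa using he) with h | h
    exacts [ho₁ e h, ho₂ e h]
  · rcases (SimpleGraph.Walk.mem_support_append_iff _ _).mp ha with h | h
    exacts [hS₁ a h, hS₂ a h]

theorem mem_right (h : OpenConnOn G ω S x y) : y ∈ S :=
  let ⟨w, _, hS⟩ := h
  hS y w.end_mem_support

theorem mono (h : OpenConnOn G ω S x y) (hω : ∀ e, ω e = true → ω' e = true) :
    OpenConnOn G ω' S x y :=
  let ⟨w, ho, hS⟩ := h
  ⟨w, fun e he => hω e (ho e he), hS⟩

theorem of_mem_support [DecidableEq V] (w : G.Walk x y) (ho : ∀ e ∈ w.edges, ω e = true)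
    (hS : ∀ a ∈ w.support, a ∈ S) (hz : z ∈ w.support) : OpenConnOn G ω S x z :=
  ⟨w.takeUntil z hz, fun e he => ho e (w.edges_takeUntil_subset_edges hz he),
    fun a ha => hS a (w.support_takeUntil_subset_support hz ha)⟩

end OpenConnOn

open Classical in
noncomputable def closeOff {E : Type*} (P : Set E) (ω : E → Bool) (e : E) : Bool :=
  if e ∈ P then false else ω e

theorem closeOff_eq_true {E : Type*} {P : Set E} {ω : E → Bool} {e : E} :
    closeOff P ω e = true ↔ e ∉ P ∧ ω e = true := by
  unfold closeOff; split_ifs with h <;> simp [h]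

theorem dependsOn_closeOff {E β : Type*} (P : Set E) (f : (E → Bool) → β) :
    DependsOn (fun ω => f (closeOff P ω)) Pᶜ := fun ω ω' h =>
  congrArg f <| funext fun e => by
    unfold closeOff
    split_ifs with he
    · rfl
    · exact h e he

def IsCutEdge (G : SimpleGraph V) (S : Set V) (e : Sym2 V) : Prop :=
  e ∈ G.edgeSet ∧ ∃ x y : V, e = s(x, y) ∧ x ∈ S ∧ y ∉ S

def LinkedCutEdge (G : SimpleGraph V) (ω : Sym2 V → Bool) (S : Set V) (v : V) (e : Sym2 V) :
    Prop :=
  IsCutEdge G S e ∧ ∃ x ∈ e, OpenConnOn G ω S v x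

namespace Alg

variable (A : Alg V) (ω ω' : Sym2 V → Bool)

def probe (i : ℕ) : Sym2 V := A.next (A.hist ω i)

def probed (i : ℕ) : Set (Sym2 V) := {e | ∃ b, (e, b) ∈ A.hist ω i}

variable {A ω ω'}

theorem eq_of_mem_hist {n : ℕ} {e : Sym2 V} {b : Bool} (h : (e, b) ∈ A.hist ω n) : ω e = b := by
  induction n with
  | zero => simp [hist] at h
  | succ n ih =>
    rcases List.mem_cons.mp h with h | h
    · cases h; rfl
    · exact ih h

theorem exists_probe_eq_of_mem_hist {n : ℕ} {e : Sym2 V} {b : Bool}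
    (h : (e, b) ∈ A.hist ω n) : ∃ j < n, A.probe ω j = e := by
  induction n with
  | zero => simp [hist] at h
  | succ n ih =>
    rcases List.mem_cons.mp h with h | h
    · exact ⟨n, n.lt_succ_self, (congrArg Prod.fst h).symm⟩
    · obtain ⟨j, hj, he⟩ := ih h
      exact ⟨j, hj.trans n.lt_succ_self, he⟩

theorem hist_congr {n : ℕ} (h : ∀ e ∈ A.probed ω n, ω' e = ω e) :
    A.hist ω' n = A.hist ω n := by
  induction n with
  | zero => rfl
  | succ n ih =>
    have hn : A.hist ω' n = A.hist ω n :=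
      ih fun e ⟨b, he⟩ => h e ⟨b, List.mem_cons_of_mem _ he⟩
    simp only [hist, hn, h _ ⟨_, List.mem_cons_self⟩]

theorem dependsOn_hist_eq (n : ℕ) (h : List (Sym2 V × Bool)) :
    DependsOn (fun ω => A.hist ω n = h) {e | ∃ b, (e, b) ∈ h} := fun ω ω' hag => by
  refine propext ⟨?_, ?_⟩
  · rintro rfl
    exact hist_congr fun e he => (hag e he).symm
  · rintro rfl
    exact hist_congr hag

variable {G : SimpleGraph V} {S : Set V} {u v : V}

theorem exists_linked_probe_of_reached {a : V} {j : ℕ}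
    (ha : a ∈ reachedFrom G u (A.probedOpen ω j)) (hva : OpenConnOn G ω S v a)
    (huv : ¬ OpenConnOn G ω S u v) : ∃ k < j, LinkedCutEdge G ω S v (A.probe ω k) := by
  obtain ⟨Q, hQ⟩ := ha
  have hQopen : ∀ e ∈ Q.edges, ω e = true := fun e he => eq_of_mem_hist (hQ e he)
  by_cases hQS : ∀ z ∈ Q.support, z ∈ S
  · exact absurd (OpenConnOn.trans ⟨Q, hQopen, hQS⟩ hva.symm) huv
  obtain ⟨c, d, hc, hcd, Q', hsub, hS⟩ := Q.exists_entry_edge hva.mem_right hQS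
  obtain ⟨k, hk, hke⟩ := exists_probe_eq_of_mem_hist (hQ _ hcd)
  refine ⟨k, hk, hke ▸ ⟨⟨Q.edges_subset_edgeSet hcd, d, c, Sym2.eq_swap, hS d Q'.start_mem_support,
    hc⟩, d, Sym2.mem_mk_right c d, ?_⟩⟩
  exact hva.trans (OpenConnOn.symm ⟨Q', fun e he => hQopen e (hsub he), hS⟩)

theorem exists_fresh_linked_probe_of_succeedsBy (hv : v ∈ S)
    (hA : A.IsLocal G u) {s : ℕ} (hsucc : A.SucceedsBy G ω u v s)
    (huv : ¬ OpenConnOn G ω S u v) :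
    ∃ i < s, LinkedCutEdge G (closeOff (A.probed ω i) ω) S v (A.probe ω i) := by
  classical
  obtain ⟨k, hks, hk⟩ := exists_linked_probe_of_reached hsucc (.refl hv) huv
  have hex : ∃ i, LinkedCutEdge G ω S v (A.probe ω i) := ⟨k, hk⟩
  obtain ⟨hcut, x, hx, q, hqopen, hqS⟩ := Nat.find_spec hex
  refine ⟨Nat.find hex, (Nat.find_min' hex hk).trans_lt hks, hcut, x, hx, q,
    fun f hf => closeOff_eq_true.2 ⟨?_, hqopen f hf⟩, hqS⟩
  rintro ⟨b, hfb⟩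
  obtain ⟨j, hj, rfl⟩ := exists_probe_eq_of_mem_hist hfb
  obtain ⟨a, ha, haf⟩ := hA ω j
  obtain ⟨i, hij, hi⟩ := exists_linked_probe_of_reached ha
    (.of_mem_support q hqopen hqS (q.mem_support_of_mem_edges hf haf)) huv
  exact Nat.find_min hex (hij.trans hj) hi

end Alg

theorem perc_hist_eq_inter_fresh_linked_le [Fintype V] [DecidableEq V] {G : SimpleGraph V}
    {p : ℝ} {S : Set V} {v : V} {η : ℝ≥0∞}
    (hη : ∀ e, IsCutEdge G S e → perc (Sym2 V) p {ω | ∃ x ∈ e, OpenConnOn G ω S v x} ≤ η)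
    (A : Alg V) (i : ℕ) (h : List (Sym2 V × Bool)) :
    perc (Sym2 V) p ({ω | A.hist ω i = h} ∩
        {ω | LinkedCutEdge G (closeOff (A.probed ω i) ω) S v (A.probe ω i)})
      ≤ η * perc (Sym2 V) p {ω | A.hist ω i = h} := by
  set P : Set (Sym2 V) := {e | ∃ b, (e, b) ∈ h}
  set L := {ω : Sym2 V → Bool | ∃ x ∈ A.next h, OpenConnOn G ω S v x}
  by_cases hcut : IsCutEdge G S (A.next h)
  swap
  · refine (measure_mono_null ?_ measure_empty).trans_le bot_le
    rintro ω ⟨hω, hlink⟩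
    exact hcut ((show A.hist ω i = h from hω) ▸ hlink.1)
  have hsub : {ω | A.hist ω i = h} ∩
      {ω | LinkedCutEdge G (closeOff (A.probed ω i) ω) S v (A.probe ω i)}
      ⊆ {ω | A.hist ω i = h} ∩ {ω | closeOff P ω ∈ L} := by
    rintro ω ⟨rfl, -, hlink⟩
    exact ⟨rfl, hlink⟩
  have hLsub : {ω | closeOff P ω ∈ L} ⊆ L := fun ω ⟨x, hx, hconn⟩ =>
    ⟨x, hx, hconn.mono fun _ he => (closeOff_eq_true.1 he).2⟩
  have hL : perc (Sym2 V) p {ω | closeOff P ω ∈ L} ≤ η := (measure_mono hLsub).trans (hη _ hcut)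
  calc _ ≤ perc (Sym2 V) p ({ω | A.hist ω i = h} ∩ {ω | closeOff P ω ∈ L}) := measure_mono hsub
    _ = perc (Sym2 V) p {ω | A.hist ω i = h} * perc (Sym2 V) p {ω | closeOff P ω ∈ L} :=
      measure_pi_inter_eq_mul_of_dependsOn _ (A.dependsOn_hist_eq i h)
        (dependsOn_closeOff P (· ∈ L))
    _ ≤ η * perc (Sym2 V) p {ω | A.hist ω i = h} := by
      rw [mul_comm]; gcongr

theorem perc_fresh_linked_probe_le [Fintype V] [DecidableEq V] {G : SimpleGraph V}
    {p : ℝ} {S : Set V} {v : V} {η : ℝ≥0∞}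
    (hη : ∀ e, IsCutEdge G S e → perc (Sym2 V) p {ω | ∃ x ∈ e, OpenConnOn G ω S v x} ≤ η)
    (A : Alg V) (i : ℕ) :
    perc (Sym2 V) p {ω | LinkedCutEdge G (closeOff (A.probed ω i) ω) S v (A.probe ω i)} ≤ η := by
  simpa using measure_le_mul_of_forall_fiber (K := fun ω => A.hist ω i)
    (fun _ => .of_discrete) (perc_hist_eq_inter_fresh_linked_le hη A i)

theorem lower_bound_lemma_general {V : Type*} [Fintype V] [DecidableEq V]
    (G : SimpleGraph V) (p : ℝ)
    (S : Set V) (u v : V) (hv : v ∈ S) (η : ℝ≥0∞)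
    (hη : ∀ e ∈ G.edgeSet, (∃ x y : V, e = s(x, y) ∧ x ∈ S ∧ y ∉ S) →
      perc (Sym2 V) p {ω | ∃ x, x ∈ e ∧ OpenConnOn G ω S v x} ≤ η)
    (A : Alg V) (hA : A.IsLocal G u) (t : ℕ) :
    (perc (Sym2 V) p)[|{ω | OpenConn G ω u v}]
        {ω | ∃ s < t, A.SucceedsBy G ω u v s}
      ≤ ((t : ℝ≥0∞) * η + perc (Sym2 V) p {ω | OpenConnOn G ω S u v})
          / perc (Sym2 V) p {ω | OpenConn G ω u v} := by
  set μ := perc (Sym2 V) p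
  set fresh := fun i => {ω | LinkedCutEdge G (closeOff (A.probed ω i) ω) S v (A.probe ω i)}
  have hcover : {ω | OpenConn G ω u v} ∩ {ω | ∃ s < t, A.SucceedsBy G ω u v s}
      ⊆ {ω | OpenConnOn G ω S u v} ∪ ⋃ i ∈ Finset.range t, fresh i := by
    rintro ω ⟨-, s, hst, hsucc⟩
    by_cases huv : OpenConnOn G ω S u v
    · exact .inl huv
    obtain ⟨i, his, hi⟩ := A.exists_fresh_linked_probe_of_succeedsBy hv hA hsucc huv
    exact .inr (mem_biUnion (Finset.mem_range.2 (his.trans hst)) hi)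
  rw [cond_apply .of_discrete, ENNReal.div_eq_inv_mul]
  gcongr
  calc _ ≤ μ ({ω | OpenConnOn G ω S u v} ∪ ⋃ i ∈ Finset.range t, fresh i) := measure_mono hcover
    _ ≤ μ {ω | OpenConnOn G ω S u v} + ∑ i ∈ Finset.range t, μ (fresh i) := by
        grw [measure_union_le, measure_biUnion_finset_le]
    _ ≤ μ {ω | OpenConnOn G ω S u v} + ∑ _i ∈ Finset.range t, η := by
        gcongr with i
        exact perc_fresh_linked_probe_le (fun e he => hη e he.1 he.2) A i
    _ = t * η + μ {ω | OpenConnOn G ω S u v} := by simp [add_comm]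

/-- **Lower bound lemma (general `u`).** If every edge `e` crossing the cut
`(S, S̄)` satisfies `Pr[(v ∼ e) ∈ S] ≤ η`, then any local routing algorithm
from `u` to `v` succeeds within fewer than `t` probes with conditional
probability (given `u ∼ v`) at most `(t·η + Pr[(u ∼ v) ∈ S]) / Pr[u ∼ v]`. -/
theorem lower_bound_lemma {V : Type*} [Fintype V] [DecidableEq V]
    (G : SimpleGraph V) (p : ℝ) (hp0 : 0 ≤ p) (hp1 : p ≤ 1)
    (S : Set V) (u v : V) (hv : v ∈ S) (η : ℝ≥0∞)
    (hη : ∀ e ∈ G.edgeSet, (∃ x y : V, e = s(x, y) ∧ x ∈ S ∧ y ∉ S) →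
      perc (Sym2 V) p {ω | ∃ x, x ∈ e ∧ OpenConnOn G ω S v x} ≤ η)
    (A : Alg V) (hA : A.IsLocal G u) (t : ℕ) :
    (perc (Sym2 V) p)[|{ω | OpenConn G ω u v}]
        {ω | ∃ s < t, A.SucceedsBy G ω u v s}
      ≤ ((t : ℝ≥0∞) * η + perc (Sym2 V) p {ω | OpenConnOn G ω S u v})
          / perc (Sym2 V) p {ω | OpenConn G ω u v} :=
  lower_bound_lemma_general G p S u v hv η hη A hA t
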